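/- arXiv:1907.10666 — 2 statements merged into one kernel-verified Lean document; each statement's English description precedes it below -/
import Mathlib

section
/- Let E ⊆ ℤ³ satisfy properties (A), (B), (C), and fix z ∈ ℤ with z < (c(E))_3. Suppose there exist maximal points (b_1, z) ∈ M(E_{{1,3}}) and (b_2, z) ∈ M(E_{{2,3}}), but z ∉ pr_3(RM(E)). Then there exists exactly one absolute maximal of E with third coordinate equal to z. -/
namespace Colength

/-- The fiber `F_J(E, α)`: elements of `E` agreeing with `α` on `J` and strictly
larger outside `J`. -/
def Fiber {ι : Type*} (E : Set (ι → ℤ)) (J : Finset ι) (α : ι → ℤ) : Set (ι → ℤ) :=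
  {β | β ∈ E ∧ (∀ j ∈ J, β j = α j) ∧ (∀ i ∉ J, α i < β i)}

/-- The closed fiber `F̄_i(E, α)`. -/
def ClFiber {ι : Type*} (E : Set (ι → ℤ)) (i : ι) (α : ι → ℤ) : Set (ι → ℤ) :=
  {β | β ∈ E ∧ β i = α i ∧ ∀ j, j ≠ i → α j ≤ β j}

/-- `α` is a maximal point of `E`: the fiber `F(E,α) = ⋃ᵢ F_{i}(E,α)` is empty. -/
def IsMaximalPt {ι : Type*} [DecidableEq ι] (E : Set (ι → ℤ)) (α : ι → ℤ) : Prop :=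
  α ∈ E ∧ ∀ i : ι, Fiber E {i} α = ∅

/-- `α` is a relative maximal of `E`. -/
def IsRelMax {ι : Type*} [DecidableEq ι] (E : Set (ι → ℤ)) (α : ι → ℤ) : Prop :=
  IsMaximalPt E α ∧ ∀ J : Finset ι, 2 ≤ J.card → Fiber E J α ≠ ∅

/-- `α` is an absolute maximal of `E`. -/
def IsAbsMax {ι : Type*} [Fintype ι] (E : Set (ι → ℤ)) (α : ι → ℤ) : Prop :=
  α ∈ E ∧ ∀ J : Finset ι, J ≠ ∅ → J ≠ Finset.univ → Fiber E J α = ∅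

/-- Property (A): closure under componentwise minimum. -/
def PropA {ι : Type*} (E : Set (ι → ℤ)) : Prop :=
  ∀ α ∈ E, ∀ β ∈ E, (fun i => min (α i) (β i)) ∈ E

/-- Property (B): the exchange property. -/
def PropB {ι : Type*} (E : Set (ι → ℤ)) : Prop :=
  ∀ α ∈ E, ∀ β ∈ E, α ≠ β → ∀ i, α i = β i →
    ∃ γ ∈ E, α i < γ i ∧ ∀ j, j ≠ i →
      min (α j) (β j) ≤ γ j ∧ (α j ≠ β j → γ j = min (α j) (β j))

/-- Property (C): `E` is bounded below and contains `c + ℕ^r` for some `c ∈ ℕ^r`. -/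
def PropC {ι : Type*} (E : Set (ι → ℤ)) : Prop :=
  (∃ a : ι → ℤ, ∀ β ∈ E, a ≤ β) ∧
  (∃ c : ι → ℤ, 0 ≤ c ∧ ∀ x : ι → ℤ, c ≤ x → x ∈ E)

/-- `c` is the conductor of `E`: the least element with `c + ℕ^r ⊆ E`. -/
def IsConductor {ι : Type*} (E : Set (ι → ℤ)) (c : ι → ℤ) : Prop :=
  (∀ x : ι → ℤ, c ≤ x → x ∈ E) ∧ ∀ γ : ι → ℤ, (∀ x : ι → ℤ, γ ≤ x → x ∈ E) → c ≤ γ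

/-- Projection to coordinates `{1,3}` (indices `0` and `2`) for `r = 3`. -/
def pr13 (x : Fin 3 → ℤ) : Fin 2 → ℤ := ![x 0, x 2]

/-- Projection to coordinates `{2,3}` (indices `1` and `2`) for `r = 3`. -/
def pr23 (x : Fin 3 → ℤ) : Fin 2 → ℤ := ![x 1, x 2]

end Colength

section Aux

open Colength

private lemma fin3_card2 : ∀ J : Finset (Fin 3), 2 ≤ J.card →
    J = {0,1} ∨ J = {0,2} ∨ J = {1,2} ∨ J = Finset.univ := by decide

private lemma fin3_proper : ∀ J : Finset (Fin 3), J ≠ ∅ → J ≠ Finset.univ →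
    J = {0} ∨ J = {1} ∨ J = {2} ∨ J = {0,1} ∨ J = {0,2} ∨ J = {1,2} := by decide

end Aux

open Colength in
/-- Lemma 15: if `z < c(E)_3`, both `E_{13}` and `E_{23}` have a
maximal point with second coordinate `z`, and no relative maximal of `E` has
third coordinate `z`, then `E` has exactly one absolute maximal at level `z`. -/
theorem abs_maximal_count_case_both_no_RM (E : Set (Fin 3 → ℤ))
    (hA : PropA E) (hB : PropB E) (hC : PropC E)
    (c : Fin 3 → ℤ) (hc : IsConductor E c) (z : ℤ) (hz : z < c 2)
    (h13 : ∃ b1 : ℤ, IsMaximalPt (pr13 '' E) ![b1, z])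
    (h23 : ∃ b2 : ℤ, IsMaximalPt (pr23 '' E) ![b2, z])
    (hnoRM : ¬∃ α : Fin 3 → ℤ, IsRelMax E α ∧ α 2 = z) :
    ∃! θ : Fin 3 → ℤ, IsAbsMax E θ ∧ θ 2 = z := by
  clear hC hc hz
  obtain ⟨b1, h13⟩ := h13
  obtain ⟨b2, h23⟩ := h23
  -- Bounds from the maximality of (b1, z) in E13.
  have hbound1 : ∀ x ∈ E, x 2 = z → x 0 ≤ b1 := by
    intro x hx h2
    by_contra hgt
    push_neg at hgt
    have hm : pr13 x ∈ Fiber (pr13 '' E) {1} ![b1, z] := by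
      refine ⟨⟨x, hx, rfl⟩, ?_, ?_⟩
      · intro j hj
        fin_cases j
        · simp at hj
        · simp [pr13, h2]
      · intro j hj
        fin_cases j
        · simpa [pr13] using hgt
        · simp at hj
    rw [h13.2 1] at hm
    exact hm
  have hban1 : ∀ x ∈ E, x 0 = b1 → x 2 ≤ z := by
    intro x hx h0
    by_contra hgt
    push_neg at hgt
    have hm : pr13 x ∈ Fiber (pr13 '' E) {0} ![b1, z] := by
      refine ⟨⟨x, hx, rfl⟩, ?_, ?_⟩
      · intro j hj
        fin_cases j
        · simp [pr13, h0]
        · simp at hj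
      · intro j hj
        fin_cases j
        · simp at hj
        · simpa [pr13] using hgt
    rw [h13.2 0] at hm
    exact hm
  have hbound2 : ∀ x ∈ E, x 2 = z → x 1 ≤ b2 := by
    intro x hx h2
    by_contra hgt
    push_neg at hgt
    have hm : pr23 x ∈ Fiber (pr23 '' E) {1} ![b2, z] := by
      refine ⟨⟨x, hx, rfl⟩, ?_, ?_⟩
      · intro j hj
        fin_cases j
        · simp at hj
        · simp [pr23, h2]
      · intro j hj
        fin_cases j
        · simpa [pr23] using hgt
        · simp at hj
    rw [h23.2 1] at hm
    exact hm
  have hban2 : ∀ x ∈ E, x 1 = b2 → x 2 ≤ z := by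
    intro x hx h0
    by_contra hgt
    push_neg at hgt
    have hm : pr23 x ∈ Fiber (pr23 '' E) {0} ![b2, z] := by
      refine ⟨⟨x, hx, rfl⟩, ?_, ?_⟩
      · intro j hj
        fin_cases j
        · simp [pr23, h0]
        · simp at hj
      · intro j hj
        fin_cases j
        · simp at hj
        · simpa [pr23] using hgt
    rw [h23.2 0] at hm
    exact hm
  -- the greatest u with (b1, u, z) ∈ E
  obtain ⟨u, ⟨A, hAE, hA0, hA1, hA2⟩, humax⟩ :=
    Int.exists_greatest_of_bdd (P := fun y => ∃ x ∈ E, x 0 = b1 ∧ x 1 = y ∧ x 2 = z)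
      ⟨b2, by rintro y ⟨x, hx, -, h1, h2⟩; exact h1 ▸ hbound2 x hx h2⟩
      (by
        obtain ⟨x, hxE, hxp⟩ := h13.1
        have h0 : x 0 = b1 := by simpa [pr13] using congrFun hxp 0
        have h2 : x 2 = z := by simpa [pr13] using congrFun hxp 1
        exact ⟨x 1, x, hxE, h0, rfl, h2⟩)
  -- the greatest v with (v, b2, z) ∈ E
  obtain ⟨v, ⟨B, hBE, hB0, hB1, hB2⟩, hvmax⟩ :=
    Int.exists_greatest_of_bdd (P := fun w => ∃ x ∈ E, x 0 = w ∧ x 1 = b2 ∧ x 2 = z)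
      ⟨b1, by rintro w ⟨x, hx, h0, -, h2⟩; exact h0 ▸ hbound1 x hx h2⟩
      (by
        obtain ⟨x, hxE, hxp⟩ := h23.1
        have h1 : x 1 = b2 := by simpa [pr23] using congrFun hxp 0
        have h2 : x 2 = z := by simpa [pr23] using congrFun hxp 1
        exact ⟨x 0, x, hxE, rfl, h1, h2⟩)
  have hub2 : u ≤ b2 := hA1 ▸ hbound2 A hAE hA2
  have hvb1 : v ≤ b1 := hB0 ▸ hbound1 B hBE hB2
  -- KEY CLAIM: u = b2
  have hu : u = b2 := by
    by_contra hne
    have hult : u < b2 := lt_of_le_of_ne hub2 hne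
    have hvlt : v < b1 := by
      rcases lt_or_eq_of_le hvb1 with h | h
      · exact h
      · exact absurd (humax b2 ⟨B, hBE, h ▸ hB0, hB1, hB2⟩) (not_le.mpr hult)
    -- δ = min(A, B) = (v, u, z)
    have hDE := hA A hAE B hBE
    set D : Fin 3 → ℤ := fun i => min (A i) (B i) with hDdef
    have hD0 : D 0 = v := by simp [hDdef, hA0, hB0, min_eq_right hvb1]
    have hD1 : D 1 = u := by simp [hDdef, hA1, hB1, min_eq_left hub2]
    have hD2 : D 2 = z := by simp [hDdef, hA2, hB2]
    -- γ = (v, u, t) with t > z, from exchange at i = 2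
    have hABne : A ≠ B := by
      intro h
      rw [h, hB0] at hA0
      exact absurd hA0.symm (ne_of_gt hvlt)
    obtain ⟨G0, hG0E, hG0gt, hG0p⟩ := hB A hAE B hBE hABne 2 (by rw [hA2, hB2])
    have hG00 : G0 0 = v := by
      rw [(hG0p 0 (by decide)).2 (by rw [hA0, hB0]; exact ne_of_gt hvlt), hA0, hB0]
      exact min_eq_right hvb1
    have hG01 : G0 1 = u := by
      rw [(hG0p 1 (by decide)).2 (by rw [hA1, hB1]; exact ne_of_lt hult), hA1, hB1]
      exact min_eq_left hub2
    have hG0t : z < G0 2 := hA2 ▸ hG0gt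
    -- the set T, and its element with greatest first coordinate
    obtain ⟨ρ0, hQρ, hρmax⟩ :=
      Int.exists_greatest_of_bdd
        (P := fun x => v ≤ x ∧ ∃ y, u ≤ y ∧ (∃ X ∈ E, X 0 = x ∧ X 1 = y ∧ X 2 = z) ∧
          (∃ Y ∈ E, Y 0 = x ∧ Y 1 = y ∧ z < Y 2))
        ⟨b1, by rintro x ⟨-, y, -, ⟨X, hXE, h0, -, h2⟩, -⟩; exact h0 ▸ hbound1 X hXE h2⟩
        ⟨v, le_refl v, u, le_refl u, ⟨D, hDE, hD0, hD1, hD2⟩, ⟨G0, hG0E, hG00, hG01, hG0t⟩⟩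
    obtain ⟨hvρ, ρ1, hρ1u, ⟨X, hXE, hX0, hX1, hX2⟩, ⟨G, hGE, hGx0, hGx1, hGt⟩⟩ := hQρ
    -- Claim W: no point of E at level z strictly to the upper-right of (ρ0, ρ1)
    have W : ∀ σ ∈ E, σ 2 = z → ρ0 < σ 0 → σ 1 ≤ ρ1 := by
      intro σ hσE hσ2 hσ0
      by_contra h
      push_neg at h
      have hσ1u : u < σ 1 := lt_of_le_of_lt hρ1u h
      have hσ0b1 : σ 0 < b1 := by
        rcases lt_or_eq_of_le (hbound1 σ hσE hσ2) with h' | h'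
        · exact h'
        · exact absurd (humax (σ 1) ⟨σ, hσE, h', rfl, hσ2⟩) (not_le.mpr hσ1u)
      have hne' : σ ≠ A := by
        intro h'
        rw [h', hA0] at hσ0b1
        exact lt_irrefl b1 hσ0b1
      obtain ⟨χ, hχE, hχgt, hχp⟩ := hB σ hσE A hAE hne' 2 (by rw [hσ2, hA2])
      have hχ0 : χ 0 = σ 0 := by
        rw [(hχp 0 (by decide)).2 (by rw [hA0]; exact ne_of_lt hσ0b1), hA0]
        exact min_eq_left (le_of_lt hσ0b1)
      have hχ1 : χ 1 = u := by
        rw [(hχp 1 (by decide)).2 (by rw [hA1]; exact ne_of_gt hσ1u), hA1]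
        exact min_eq_right (le_of_lt hσ1u)
      have hχ2 : z < χ 2 := hσ2 ▸ hχgt
      have hmE := hA σ hσE A hAE
      have : v ≤ σ 0 ∧ ∃ y, u ≤ y ∧ (∃ X' ∈ E, X' 0 = σ 0 ∧ X' 1 = y ∧ X' 2 = z) ∧
          (∃ Y ∈ E, Y 0 = σ 0 ∧ Y 1 = y ∧ z < Y 2) := by
        refine ⟨le_of_lt (lt_of_le_of_lt hvρ hσ0), u, le_refl u,
          ⟨fun i => min (σ i) (A i), hmE, ?_, ?_, ?_⟩, ⟨χ, hχE, hχ0, hχ1, hχ2⟩⟩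
        · simp [hA0, min_eq_left (le_of_lt hσ0b1)]
        · simp [hA1, min_eq_right (le_of_lt hσ1u)]
        · simp [hσ2, hA2]
      exact absurd (hρmax (σ 0) this) (not_le.mpr hσ0)
    -- Claim F0: empty fiber in direction 0
    have F0c : ∀ σ ∈ E, σ 0 = ρ0 → ρ1 < σ 1 → σ 2 ≤ z := by
      intro σ hσE hσ0 hσ1
      by_contra h
      push_neg at h
      have hGne : G ≠ σ := by
        intro h'
        rw [h'] at hGx1
        exact absurd hGx1.symm (ne_of_lt hσ1)
      obtain ⟨ξ, hξE, hξgt, hξp⟩ := hB G hGE σ hσE hGne 0 (by rw [hGx0, hσ0])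
      have hξ0 : ρ0 < ξ 0 := hGx0 ▸ hξgt
      have hξ1 : ξ 1 = ρ1 := by
        rw [(hξp 1 (by decide)).2 (by rw [hGx1]; exact ne_of_lt hσ1), hGx1]
        exact min_eq_left (le_of_lt hσ1)
      have hξ2 : z < ξ 2 :=
        lt_of_lt_of_le (lt_min hGt h) (by simpa [hGx1] using (hξp 2 (by decide)).1)
      have hXne : X ≠ σ := by
        intro h'
        rw [h'] at hX1
        exact absurd hX1.symm (ne_of_lt hσ1)
      obtain ⟨P, hPE, hPgt, hPp⟩ := hB X hXE σ hσE hXne 0 (by rw [hX0, hσ0])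
      have hP0 : ρ0 < P 0 := hX0 ▸ hPgt
      have hP1 : P 1 = ρ1 := by
        rw [(hPp 1 (by decide)).2 (by rw [hX1]; exact ne_of_lt hσ1), hX1]
        exact min_eq_left (le_of_lt hσ1)
      have hP2 : P 2 = z := by
        rw [(hPp 2 (by decide)).2 (by rw [hX2]; exact ne_of_lt h), hX2]
        exact min_eq_left (le_of_lt h)
      have hPξne : P ≠ ξ := by
        intro h'
        rw [h'] at hP2
        exact absurd (hP2 ▸ hξ2) (lt_irrefl z)
      obtain ⟨χ, hχE, hχgt, hχp⟩ := hB P hPE ξ hξE hPξne 1 (by rw [hP1, hξ1])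
      have hχ1 : ρ1 < χ 1 := hP1 ▸ hχgt
      have hχ0 : ρ0 < χ 0 := lt_of_lt_of_le (lt_min hP0 hξ0) (hχp 0 (by decide)).1
      have hχ2 : χ 2 = z := by
        rw [(hχp 2 (by decide)).2 (by rw [hP2]; exact ne_of_lt hξ2), hP2]
        exact min_eq_left (le_of_lt hξ2)
      exact absurd (W χ hχE hχ2 hχ0) (not_le.mpr hχ1)
    -- Claim F1: empty fiber in direction 1
    have F1c : ∀ σ ∈ E, σ 1 = ρ1 → ρ0 < σ 0 → σ 2 ≤ z := by
      intro σ hσE hσ1 hσ0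
      by_contra h
      push_neg at h
      have hGne : G ≠ σ := by
        intro h'
        rw [h'] at hGx0
        exact absurd hGx0.symm (ne_of_lt hσ0)
      obtain ⟨χ, hχE, hχgt, hχp⟩ := hB G hGE σ hσE hGne 1 (by rw [hGx1, hσ1])
      have hχ1 : ρ1 < χ 1 := hGx1 ▸ hχgt
      have hχ0 : χ 0 = ρ0 := by
        rw [(hχp 0 (by decide)).2 (by rw [hGx0]; exact ne_of_lt hσ0), hGx0]
        exact min_eq_left (le_of_lt hσ0)
      have hχ2 : z < χ 2 :=
        lt_of_lt_of_le (lt_min hGt h) (by simpa [hGx0] using (hχp 2 (by decide)).1)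
      exact absurd (F0c χ hχE hχ0 hχ1) (not_le.mpr hχ2)
    -- X is a maximal point:
    have hXmax : IsMaximalPt E X := by
      refine ⟨hXE, fun i => Set.eq_empty_iff_forall_notMem.mpr fun β hβ => ?_⟩
      obtain ⟨hβE, hagr, hstr⟩ := hβ
      fin_cases i
      · have h0 : β 0 = ρ0 := hX0 ▸ hagr 0 (by decide)
        have h1 : ρ1 < β 1 := hX1 ▸ hstr 1 (by decide)
        have h2 : z < β 2 := hX2 ▸ hstr 2 (by decide)
        exact absurd (F0c β hβE h0 h1) (not_le.mpr h2)
      · have h1 : β 1 = ρ1 := hX1 ▸ hagr 1 (by decide)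
        have h0 : ρ0 < β 0 := hX0 ▸ hstr 0 (by decide)
        have h2 : z < β 2 := hX2 ▸ hstr 2 (by decide)
        exact absurd (F1c β hβE h1 h0) (not_le.mpr h2)
      · have h2 : β 2 = z := hX2 ▸ hagr 2 (by decide)
        have h0 : ρ0 < β 0 := hX0 ▸ hstr 0 (by decide)
        have h1 : ρ1 < β 1 := hX1 ▸ hstr 1 (by decide)
        exact absurd (W β hβE h2 h0) (not_le.mpr h1)
    -- The three 2-fibers of X are nonempty.
    have hXGne : X ≠ G := by
      intro h'
      rw [h'] at hX2
      exact absurd (hX2 ▸ hGt) (lt_irrefl z)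
    -- F01 : G itself
    have hF01 : G ∈ Fiber E {0,1} X := by
      refine ⟨hGE, ?_, ?_⟩
      · intro j hj
        fin_cases j
        · exact hGx0.trans hX0.symm
        · exact hGx1.trans hX1.symm
        · exact absurd hj (by decide)
      · intro j hj
        fin_cases j
        · exact absurd hj (by decide)
        · exact absurd hj (by decide)
        · exact hX2.trans_lt hGt
    -- F02 from exchange at i = 1
    obtain ⟨χa, hχaE, hχagt, hχap⟩ := hB X hXE G hGE hXGne 1 (by rw [hX1, hGx1])
    have hχa1 : ρ1 < χa 1 := hX1 ▸ hχagt
    have hχa2 : χa 2 = z := by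
      rw [(hχap 2 (by decide)).2 (by rw [hX2]; exact ne_of_lt hGt), hX2]
      exact min_eq_left (le_of_lt hGt)
    have hχa0ge : ρ0 ≤ χa 0 := by
      have := (hχap 0 (by decide)).1
      rwa [hX0, hGx0, min_self] at this
    have hχa0 : χa 0 = ρ0 := by
      rcases lt_or_eq_of_le hχa0ge with h' | h'
      · exact absurd (W χa hχaE hχa2 h') (not_le.mpr hχa1)
      · exact h'.symm
    have hF02 : χa ∈ Fiber E {0,2} X := by
      refine ⟨hχaE, ?_, ?_⟩
      · intro j hj
        fin_cases j
        · exact hχa0.trans hX0.symm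
        · exact absurd hj (by decide)
        · exact hχa2.trans hX2.symm
      · intro j hj
        fin_cases j
        · exact absurd hj (by decide)
        · exact hX1.trans_lt hχa1
        · exact absurd hj (by decide)
    -- F12 from exchange at i = 0
    obtain ⟨χb, hχbE, hχbgt, hχbp⟩ := hB X hXE G hGE hXGne 0 (by rw [hX0, hGx0])
    have hχb0 : ρ0 < χb 0 := hX0 ▸ hχbgt
    have hχb2 : χb 2 = z := by
      rw [(hχbp 2 (by decide)).2 (by rw [hX2]; exact ne_of_lt hGt), hX2]
      exact min_eq_left (le_of_lt hGt)
    have hχb1ge : ρ1 ≤ χb 1 := by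
      have := (hχbp 1 (by decide)).1
      rwa [hX1, hGx1, min_self] at this
    have hχb1 : χb 1 = ρ1 := le_antisymm (W χb hχbE hχb2 hχb0) hχb1ge
    have hF12 : χb ∈ Fiber E {1,2} X := by
      refine ⟨hχbE, ?_, ?_⟩
      · intro j hj
        fin_cases j
        · exact absurd hj (by decide)
        · exact hχb1.trans hX1.symm
        · exact hχb2.trans hX2.symm
      · intro j hj
        fin_cases j
        · exact hX0.trans_lt hχb0
        · exact absurd hj (by decide)
        · exact absurd hj (by decide)
    -- X is a relative maximal at level z: contradiction
    refine hnoRM ⟨X, ⟨hXmax, ?_⟩, hX2⟩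
    intro J hJ
    rcases fin3_card2 J hJ with h' | h' | h' | h' <;> subst h'
    · exact Set.Nonempty.ne_empty ⟨G, hF01⟩
    · exact Set.Nonempty.ne_empty ⟨χa, hF02⟩
    · exact Set.Nonempty.ne_empty ⟨χb, hF12⟩
    · exact Set.Nonempty.ne_empty ⟨X, hXE, fun j _ => rfl,
        fun j hj => absurd (Finset.mem_univ j) hj⟩
  -- now A = (b1, b2, z) ∈ E
  have hA1' : A 1 = b2 := hA1.trans hu
  refine ⟨A, ⟨⟨hAE, ?_⟩, hA2⟩, ?_⟩
  · -- A is an absolute maximal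
    intro J hJne hJuniv
    refine Set.eq_empty_iff_forall_notMem.mpr fun β hβ => ?_
    obtain ⟨hβE, hagr, hstr⟩ := hβ
    rcases fin3_proper J hJne hJuniv with h' | h' | h' | h' | h' | h' <;> subst h'
    · have h0 : β 0 = b1 := hA0 ▸ hagr 0 (by decide)
      have h2 : z < β 2 := hA2 ▸ hstr 2 (by decide)
      exact absurd (hban1 β hβE h0) (not_le.mpr h2)
    · have h1 : β 1 = b2 := hA1' ▸ hagr 1 (by decide)
      have h2 : z < β 2 := hA2 ▸ hstr 2 (by decide)
      exact absurd (hban2 β hβE h1) (not_le.mpr h2)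
    · have h2 : β 2 = z := hA2 ▸ hagr 2 (by decide)
      have h1 : b2 < β 1 := hA1' ▸ hstr 1 (by decide)
      exact absurd (hbound2 β hβE h2) (not_le.mpr h1)
    · have h0 : β 0 = b1 := hA0 ▸ hagr 0 (by decide)
      have h2 : z < β 2 := hA2 ▸ hstr 2 (by decide)
      exact absurd (hban1 β hβE h0) (not_le.mpr h2)
    · have h2 : β 2 = z := hA2 ▸ hagr 2 (by decide)
      have h1 : b2 < β 1 := hA1' ▸ hstr 1 (by decide)
      exact absurd (hbound2 β hβE h2) (not_le.mpr h1)
    · have h2 : β 2 = z := hA2 ▸ hagr 2 (by decide)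
      have h0 : b1 < β 0 := hA0 ▸ hstr 0 (by decide)
      exact absurd (hbound1 β hβE h2) (not_le.mpr h0)
  · -- uniqueness
    rintro θ ⟨⟨hθE, hθfib⟩, hθ2⟩
    by_contra hne'
    have hθ0 : θ 0 ≤ b1 := hbound1 θ hθE hθ2
    have hθ1 : θ 1 ≤ b2 := hbound2 θ hθE hθ2
    set J : Finset (Fin 3) := Finset.univ.filter (fun j => A j = θ j) with hJdef
    have h2J : (2 : Fin 3) ∈ J := by
      rw [hJdef, Finset.mem_filter]
      exact ⟨Finset.mem_univ _, hA2.trans hθ2.symm⟩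
    have hJne : J ≠ ∅ := fun h => by rw [h] at h2J; exact absurd h2J (Finset.notMem_empty 2)
    have hJuniv : J ≠ Finset.univ := by
      intro h
      apply hne'
      funext j
      have hjJ : j ∈ J := by rw [h]; exact Finset.mem_univ j
      exact ((Finset.mem_filter.mp hjJ).2).symm
    have hmem : A ∈ Fiber E J θ := by
      refine ⟨hAE, fun j hj => (Finset.mem_filter.mp hj).2, fun j hj => ?_⟩
      have hne'' : A j ≠ θ j := by
        intro h
        exact hj (Finset.mem_filter.mpr ⟨Finset.mem_univ j, h⟩)
      have hle : θ j ≤ A j := by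
        fin_cases j
        · exact hA0.symm ▸ hθ0
        · exact hA1'.symm ▸ hθ1
        · exact le_of_eq (hθ2.trans hA2.symm)
      exact lt_of_le_of_ne hle (fun h => hne'' h.symm)
    rw [hθfib J hJne hJuniv] at hmem
    exact hmem
end

section
/- Let E ⊆ ℤ³ satisfy properties (A), (B), (C), and fix z ∈ ℤ. Suppose z ∈ pr_3(RM(E)), there exists a maximal point (b_1, z) ∈ M(E_{{1,3}}), and there is no maximal point of E_{{2,3}} with second coordinate z. If there are exactly s ≥ 1 relative maximals of E with third coordinate z, then there are exactly s absolute maximals of E with third coordinate z. -/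
open Colength


section Helpers

/-- `(x, y, z) ∈ E` : membership at level `z`. -/
def InS (E : Set (Fin 3 → ℤ)) (z x y : ℤ) : Prop :=
  ∃ β ∈ E, β 0 = x ∧ β 1 = y ∧ β 2 = z

/-- `(x, y, w) ∈ E` for some `w > z`. -/
def InT (E : Set (Fin 3 → ℤ)) (z x y : ℤ) : Prop :=
  ∃ β ∈ E, β 0 = x ∧ β 1 = y ∧ z < β 2

variable {E : Set (Fin 3 → ℤ)} {z x y x₁ y₁ x₂ y₂ : ℤ}

lemma S_min (hA : PropA E) (h1 : InT E z x₁ y₁) (h2 : InS E z x₂ y₂) :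
    InS E z (min x₁ x₂) (min y₁ y₂) := by
  obtain ⟨β, hβ, hb0, hb1, hb2⟩ := h1
  obtain ⟨γ, hγ, hc0, hc1, hc2⟩ := h2
  exact ⟨fun i => min (β i) (γ i), hA β hβ γ hγ, by simp [hb0, hc0], by simp [hb1, hc1],
    by simp only []; omega⟩

lemma exch_SS (hB : PropB E) (h1 : InS E z x₁ y₁) (h2 : InS E z x₂ y₂)
    (hx : x₁ ≠ x₂) (hy : y₁ ≠ y₂) : InT E z (min x₁ x₂) (min y₁ y₂) := by
  obtain ⟨β, hβ, hb0, hb1, hb2⟩ := h1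
  obtain ⟨γ, hγ, hc0, hc1, hc2⟩ := h2
  have hne : β ≠ γ := by intro h; rw [h] at hb0; omega
  obtain ⟨δ, hδ, hlt, hmin⟩ := hB β hβ γ hγ hne 2 (by omega)
  have h0 := hmin 0 (by decide)
  have h1 := hmin 1 (by decide)
  have e0 : δ 0 = min x₁ x₂ := by rw [h0.2 (by omega)]; omega
  have e1 : δ 1 = min y₁ y₂ := by rw [h1.2 (by omega)]; omega
  exact ⟨δ, hδ, e0, e1, by omega⟩

/-- S and T point with the same first coordinate, distinct second coordinates. -/
lemma exch_ST0 (hB : PropB E) (h1 : InS E z x y₁) (h2 : InT E z x y₂) (hy : y₁ ≠ y₂) :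
    ∃ x' > x, InS E z x' (min y₁ y₂) := by
  obtain ⟨β, hβ, hb0, hb1, hb2⟩ := h1
  obtain ⟨γ, hγ, hc0, hc1, hc2⟩ := h2
  have hne : β ≠ γ := by intro h; rw [h] at hb2; omega
  obtain ⟨δ, hδ, hlt, hmin⟩ := hB β hβ γ hγ hne 0 (by omega)
  have h1 := hmin 1 (by decide)
  have h2 := hmin 2 (by decide)
  have e1 : δ 1 = min y₁ y₂ := by rw [h1.2 (by omega)]; omega
  have e2 : δ 2 = z := by rw [h2.2 (by omega)]; omega
  exact ⟨δ 0, by omega, δ, hδ, rfl, e1, e2⟩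

/-- S and T point with the same second coordinate, distinct first coordinates. -/
lemma exch_ST1 (hB : PropB E) (h1 : InS E z x₁ y) (h2 : InT E z x₂ y) (hx : x₁ ≠ x₂) :
    ∃ y' > y, InS E z (min x₁ x₂) y' := by
  obtain ⟨β, hβ, hb0, hb1, hb2⟩ := h1
  obtain ⟨γ, hγ, hc0, hc1, hc2⟩ := h2
  have hne : β ≠ γ := by intro h; rw [h] at hb2; omega
  obtain ⟨δ, hδ, hlt, hmin⟩ := hB β hβ γ hγ hne 1 (by omega)
  have h0 := hmin 0 (by decide)
  have h2 := hmin 2 (by decide)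
  have e0 : δ 0 = min x₁ x₂ := by rw [h0.2 (by omega)]; omega
  have e2 : δ 2 = z := by rw [h2.2 (by omega)]; omega
  exact ⟨δ 1, by omega, δ, hδ, e0, rfl, e2⟩

/-- S and T at the same point: produce an S point strictly to the east. -/
lemma exch_ST_eq0 (hB : PropB E) (h1 : InS E z x y) (h2 : InT E z x y) :
    ∃ x' > x, ∃ y' ≥ y, InS E z x' y' := by
  obtain ⟨β, hβ, hb0, hb1, hb2⟩ := h1
  obtain ⟨γ, hγ, hc0, hc1, hc2⟩ := h2
  have hne : β ≠ γ := by intro h; rw [h] at hb2; omega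
  obtain ⟨δ, hδ, hlt, hmin⟩ := hB β hβ γ hγ hne 0 (by omega)
  have h1 := hmin 1 (by decide)
  have h2 := hmin 2 (by decide)
  have e2 : δ 2 = z := by rw [h2.2 (by omega)]; omega
  exact ⟨δ 0, by omega, δ 1, by omega, δ, hδ, rfl, rfl, e2⟩

/-- S and T at the same point: produce an S point strictly to the north. -/
lemma exch_ST_eq1 (hB : PropB E) (h1 : InS E z x y) (h2 : InT E z x y) :
    ∃ y' > y, ∃ x' ≥ x, InS E z x' y' := by
  obtain ⟨β, hβ, hb0, hb1, hb2⟩ := h1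
  obtain ⟨γ, hγ, hc0, hc1, hc2⟩ := h2
  have hne : β ≠ γ := by intro h; rw [h] at hb2; omega
  obtain ⟨δ, hδ, hlt, hmin⟩ := hB β hβ γ hγ hne 1 (by omega)
  have h0 := hmin 0 (by decide)
  have h2 := hmin 2 (by decide)
  have e2 : δ 2 = z := by rw [h2.2 (by omega)]; omega
  exact ⟨δ 1, by omega, δ 0, by omega, δ, hδ, rfl, rfl, e2⟩

/-- Two T points with the same first coordinate, distinct second coordinates. -/
lemma exch_TT0 (hB : PropB E) (h1 : InT E z x y₁) (h2 : InT E z x y₂) (hy : y₁ ≠ y₂) :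
    ∃ x' > x, InT E z x' (min y₁ y₂) := by
  obtain ⟨β, hβ, hb0, hb1, hb2⟩ := h1
  obtain ⟨γ, hγ, hc0, hc1, hc2⟩ := h2
  have hne : β ≠ γ := by intro h; rw [h] at hb1; omega
  obtain ⟨δ, hδ, hlt, hmin⟩ := hB β hβ γ hγ hne 0 (by omega)
  have h1 := hmin 1 (by decide)
  have h2 := hmin 2 (by decide)
  have e1 : δ 1 = min y₁ y₂ := by rw [h1.2 (by omega)]; omega
  exact ⟨δ 0, by omega, δ, hδ, rfl, e1, by omega⟩

end Helpers

section Facts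

variable {E : Set (Fin 3 → ℤ)} {z : ℤ} {α : Fin 3 → ℤ}

lemma fin3_cases (i : Fin 3) : i = 0 ∨ i = 1 ∨ i = 2 := by revert i; decide

lemma enum_two_le : ∀ J : Finset (Fin 3), 2 ≤ J.card →
    J = {0, 1} ∨ J = {0, 2} ∨ J = {1, 2} ∨ J = Finset.univ := by decide

lemma enum_proper : ∀ J : Finset (Fin 3), J ≠ ∅ → J ≠ Finset.univ →
    J = {0} ∨ J = {1} ∨ J = {2} ∨ J = {0, 1} ∨ J = {0, 2} ∨ J = {1, 2} := by decide

-- extraction from singleton-fiber emptiness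
lemma M0_of (h : Fiber E {0} α = ∅) (hz2 : α 2 = z) :
    ∀ y', α 1 < y' → ¬ InT E z (α 0) y' := by
  rintro y' hy' ⟨γ, hγ, c0, c1, c2⟩
  refine Set.eq_empty_iff_forall_notMem.mp h γ ⟨hγ, ?_, ?_⟩
  · intro j hj; have : j = 0 := Finset.mem_singleton.mp hj; subst this; omega
  · intro i hi; rcases fin3_cases i with rfl | rfl | rfl
    · simp at hi
    · omega
    · omega

lemma M1_of (h : Fiber E {1} α = ∅) (hz2 : α 2 = z) :
    ∀ x', α 0 < x' → ¬ InT E z x' (α 1) := by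
  rintro x' hx' ⟨γ, hγ, c0, c1, c2⟩
  refine Set.eq_empty_iff_forall_notMem.mp h γ ⟨hγ, ?_, ?_⟩
  · intro j hj; have : j = 1 := Finset.mem_singleton.mp hj; subst this; omega
  · intro i hi; rcases fin3_cases i with rfl | rfl | rfl
    · omega
    · simp at hi
    · omega

lemma M2_of (h : Fiber E {2} α = ∅) (hz2 : α 2 = z) :
    ∀ x' y', α 0 < x' → α 1 < y' → ¬ InS E z x' y' := by
  rintro x' y' hx' hy' ⟨γ, hγ, c0, c1, c2⟩
  refine Set.eq_empty_iff_forall_notMem.mp h γ ⟨hγ, ?_, ?_⟩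
  · intro j hj; have : j = 2 := Finset.mem_singleton.mp hj; subst this; omega
  · intro i hi; rcases fin3_cases i with rfl | rfl | rfl
    · omega
    · omega
    · simp at hi

-- extraction from pair-fiber nonemptiness
lemma F01_of (h : Fiber E {0, 1} α ≠ ∅) (hz2 : α 2 = z) : InT E z (α 0) (α 1) := by
  obtain ⟨γ, hγ, heq, hlt⟩ := Set.nonempty_iff_ne_empty.mpr h
  have e0 : γ 0 = α 0 := heq 0 (by decide)
  have e1 : γ 1 = α 1 := heq 1 (by decide)
  have l2 : α 2 < γ 2 := hlt 2 (by decide)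
  exact ⟨γ, hγ, e0, e1, by omega⟩

lemma F12_of (h : Fiber E {1, 2} α ≠ ∅) (hz2 : α 2 = z) :
    ∃ x' > α 0, InS E z x' (α 1) := by
  obtain ⟨γ, hγ, heq, hlt⟩ := Set.nonempty_iff_ne_empty.mpr h
  have e1 : γ 1 = α 1 := heq 1 (by decide)
  have e2 : γ 2 = α 2 := heq 2 (by decide)
  have l0 : α 0 < γ 0 := hlt 0 (by decide)
  exact ⟨γ 0, l0, γ, hγ, rfl, e1, by omega⟩

-- extraction from pair-fiber emptiness (absolute maximals)
lemma A01_of (h : Fiber E {0, 1} α = ∅) (hz2 : α 2 = z) : ¬ InT E z (α 0) (α 1) := by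
  rintro ⟨γ, hγ, c0, c1, c2⟩
  refine Set.eq_empty_iff_forall_notMem.mp h γ ⟨hγ, ?_, ?_⟩
  · intro j hj; rcases fin3_cases j with rfl | rfl | rfl
    · omega
    · omega
    · simp at hj
  · intro i hi; rcases fin3_cases i with rfl | rfl | rfl
    · simp at hi
    · simp at hi
    · omega

lemma A02_of (h : Fiber E {0, 2} α = ∅) (hz2 : α 2 = z) :
    ∀ y', α 1 < y' → ¬ InS E z (α 0) y' := by
  rintro y' hy' ⟨γ, hγ, c0, c1, c2⟩
  refine Set.eq_empty_iff_forall_notMem.mp h γ ⟨hγ, ?_, ?_⟩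
  · intro j hj; rcases fin3_cases j with rfl | rfl | rfl
    · omega
    · simp at hj
    · omega
  · intro i hi; rcases fin3_cases i with rfl | rfl | rfl
    · simp at hi
    · omega
    · simp at hi

lemma A12_of (h : Fiber E {1, 2} α = ∅) (hz2 : α 2 = z) :
    ∀ x', α 0 < x' → ¬ InS E z x' (α 1) := by
  rintro x' hx' ⟨γ, hγ, c0, c1, c2⟩
  refine Set.eq_empty_iff_forall_notMem.mp h γ ⟨hγ, ?_, ?_⟩
  · intro j hj; rcases fin3_cases j with rfl | rfl | rfl
    · simp at hj
    · omega
    · omega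
  · intro i hi; rcases fin3_cases i with rfl | rfl | rfl
    · omega
    · simp at hi
    · simp at hi

-- constructors for fiber emptiness
lemma fiber0_empty (hz2 : α 2 = z) (h : ∀ y', α 1 < y' → ¬ InT E z (α 0) y') :
    Fiber E {0} α = ∅ := by
  rw [Set.eq_empty_iff_forall_notMem]
  rintro γ ⟨hγ, heq, hlt⟩
  have e0 : γ 0 = α 0 := heq 0 (by decide)
  have l1 : α 1 < γ 1 := hlt 1 (by decide)
  have l2 : α 2 < γ 2 := hlt 2 (by decide)
  exact h (γ 1) l1 ⟨γ, hγ, e0, rfl, by omega⟩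

lemma fiber1_empty (hz2 : α 2 = z) (h : ∀ x', α 0 < x' → ¬ InT E z x' (α 1)) :
    Fiber E {1} α = ∅ := by
  rw [Set.eq_empty_iff_forall_notMem]
  rintro γ ⟨hγ, heq, hlt⟩
  have e1 : γ 1 = α 1 := heq 1 (by decide)
  have l0 : α 0 < γ 0 := hlt 0 (by decide)
  have l2 : α 2 < γ 2 := hlt 2 (by decide)
  exact h (γ 0) l0 ⟨γ, hγ, rfl, e1, by omega⟩

lemma fiber2_empty (hz2 : α 2 = z) (h : ∀ x' y', α 0 < x' → α 1 < y' → ¬ InS E z x' y') :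
    Fiber E {2} α = ∅ := by
  rw [Set.eq_empty_iff_forall_notMem]
  rintro γ ⟨hγ, heq, hlt⟩
  have e2 : γ 2 = α 2 := heq 2 (by decide)
  have l0 : α 0 < γ 0 := hlt 0 (by decide)
  have l1 : α 1 < γ 1 := hlt 1 (by decide)
  exact h (γ 0) (γ 1) l0 l1 ⟨γ, hγ, rfl, rfl, by omega⟩

lemma fiber01_empty (hz2 : α 2 = z) (h : ¬ InT E z (α 0) (α 1)) :
    Fiber E {0, 1} α = ∅ := by
  rw [Set.eq_empty_iff_forall_notMem]
  rintro γ ⟨hγ, heq, hlt⟩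
  have e0 : γ 0 = α 0 := heq 0 (by decide)
  have e1 : γ 1 = α 1 := heq 1 (by decide)
  have l2 : α 2 < γ 2 := hlt 2 (by decide)
  exact h ⟨γ, hγ, e0, e1, by omega⟩

lemma fiber02_empty (hz2 : α 2 = z) (h : ∀ y', α 1 < y' → ¬ InS E z (α 0) y') :
    Fiber E {0, 2} α = ∅ := by
  rw [Set.eq_empty_iff_forall_notMem]
  rintro γ ⟨hγ, heq, hlt⟩
  have e0 : γ 0 = α 0 := heq 0 (by decide)
  have e2 : γ 2 = α 2 := heq 2 (by decide)
  have l1 : α 1 < γ 1 := hlt 1 (by decide)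
  exact h (γ 1) l1 ⟨γ, hγ, e0, rfl, by omega⟩

lemma fiber12_empty (hz2 : α 2 = z) (h : ∀ x', α 0 < x' → ¬ InS E z x' (α 1)) :
    Fiber E {1, 2} α = ∅ := by
  rw [Set.eq_empty_iff_forall_notMem]
  rintro γ ⟨hγ, heq, hlt⟩
  have e1 : γ 1 = α 1 := heq 1 (by decide)
  have e2 : γ 2 = α 2 := heq 2 (by decide)
  have l0 : α 0 < γ 0 := hlt 0 (by decide)
  exact h (γ 0) l0 ⟨γ, hγ, rfl, e1, by omega⟩

-- constructors for fiber nonemptiness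
lemma fiber01_ne (hz2 : α 2 = z) (h : InT E z (α 0) (α 1)) :
    Fiber E {0, 1} α ≠ ∅ := by
  obtain ⟨γ, hγ, c0, c1, c2⟩ := h
  refine Set.nonempty_iff_ne_empty.mp ⟨γ, hγ, ?_, ?_⟩
  · intro j hj; rcases fin3_cases j with rfl | rfl | rfl
    · omega
    · omega
    · simp at hj
  · intro i hi; rcases fin3_cases i with rfl | rfl | rfl
    · simp at hi
    · simp at hi
    · omega

lemma fiber02_ne (hz2 : α 2 = z) {y' : ℤ} (hy : α 1 < y') (h : InS E z (α 0) y') :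
    Fiber E {0, 2} α ≠ ∅ := by
  obtain ⟨γ, hγ, c0, c1, c2⟩ := h
  refine Set.nonempty_iff_ne_empty.mp ⟨γ, hγ, ?_, ?_⟩
  · intro j hj; rcases fin3_cases j with rfl | rfl | rfl
    · omega
    · simp at hj
    · omega
  · intro i hi; rcases fin3_cases i with rfl | rfl | rfl
    · simp at hi
    · omega
    · simp at hi

lemma fiber12_ne (hz2 : α 2 = z) {x' : ℤ} (hx : α 0 < x') (h : InS E z x' (α 1)) :
    Fiber E {1, 2} α ≠ ∅ := by
  obtain ⟨γ, hγ, c0, c1, c2⟩ := h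
  refine Set.nonempty_iff_ne_empty.mp ⟨γ, hγ, ?_, ?_⟩
  · intro j hj; rcases fin3_cases j with rfl | rfl | rfl
    · simp at hj
    · omega
    · omega
  · intro i hi; rcases fin3_cases i with rfl | rfl | rfl
    · omega
    · simp at hi
    · simp at hi

lemma fiber_univ_ne (h : α ∈ E) : Fiber E Finset.univ α ≠ ∅ :=
  Set.nonempty_iff_ne_empty.mp
    ⟨α, h, fun _ _ => rfl, fun i hi => absurd (Finset.mem_univ i) hi⟩

end Facts

lemma fin2_cases (i : Fin 2) : i = 0 ∨ i = 1 := by revert i; decide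

open Colength in
/-- Lemma 14: if `z` occurs as third coordinate of a relative
maximal, `E_{13}` has a maximal point at level `z` but `E_{23}` does not, then
`s ≥ 1` relative maximals at level `z` give exactly `s` absolute maximals. -/
theorem abs_maximal_count_case_one_side (E : Set (Fin 3 → ℤ))
    (hA : PropA E) (hB : PropB E) (hC : PropC E) (z : ℤ)
    (hz : ∃ α : Fin 3 → ℤ, IsRelMax E α ∧ α 2 = z)
    (h13 : ∃ b1 : ℤ, IsMaximalPt (pr13 '' E) ![b1, z])
    (hno23 : ¬∃ y : ℤ, IsMaximalPt (pr23 '' E) ![y, z])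
    (s : ℕ) (hs1 : 1 ≤ s)
    (hs : {α : Fin 3 → ℤ | IsRelMax E α ∧ α 2 = z}.ncard = s) :
    {α : Fin 3 → ℤ | IsAbsMax E α ∧ α 2 = z}.ncard = s := by
  classical
  rw [← hs]
  clear hs hz hs1
  obtain ⟨b1, h13m⟩ := h13
  -- `b1` bounds the first coordinate of every point of `E` at level `z`
  have hb1 : ∀ x y : ℤ, InS E z x y → x ≤ b1 := by
    rintro x y ⟨β, hβ, c0, c1, c2⟩
    by_contra hgt
    push_neg at hgt
    refine Set.eq_empty_iff_forall_notMem.mp (h13m.2 1) (pr13 β) ⟨⟨β, hβ, rfl⟩, ?_, ?_⟩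
    · intro j hj
      have hj1 : j = 1 := Finset.mem_singleton.mp hj
      subst hj1
      simp [pr13, c2]
    · intro i hi
      rcases fin2_cases i with rfl | rfl
      · simp [pr13]; omega
      · exact absurd (Finset.mem_singleton_self 1) hi
  -- use `hno23`: at each occupied level-`z` row there is a `T`-point in the row
  -- or an `S`-point strictly higher
  have hTN : ∀ x y : ℤ, InS E z x y →
      (∃ u, InT E z u y) ∨ (∃ u y', y < y' ∧ InS E z u y') := by
    rintro x y ⟨β, hβ, c0, c1, c2⟩
    have hnm : ¬ IsMaximalPt (pr23 '' E) ![y, z] := fun h => hno23 ⟨y, h⟩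
    rw [IsMaximalPt] at hnm
    push_neg at hnm
    have hmem : ![y, z] ∈ pr23 '' E := ⟨β, hβ, by simp [pr23, c1, c2]⟩
    obtain ⟨i, hi⟩ := hnm hmem
    obtain ⟨q, hqmem, heq, hlt⟩ := hi
    obtain ⟨β', hβ', rfl⟩ := hqmem
    rcases fin2_cases i with rfl | rfl
    · left
      have e0 : β' 1 = y := by have := heq 0 (by decide); simpa [pr23] using this
      have l1 : z < β' 2 := by have := hlt 1 (by decide); simpa [pr23] using this
      exact ⟨β' 0, β', hβ', rfl, e0, l1⟩
    · right
      have e1 : β' 2 = z := by have := heq 1 (by decide); simpa [pr23] using this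
      have l0 : y < β' 1 := by have := hlt 0 (by decide); simpa [pr23] using this
      exact ⟨β' 0, β' 1, l0, β', hβ', rfl, rfl, e1⟩
  -- Step 1: every relative maximal at level `z` yields an absolute maximal in the same row
  have key1 : ∀ α : Fin 3 → ℤ, IsRelMax E α → α 2 = z →
      ∃ γ : Fin 3 → ℤ, IsAbsMax E γ ∧ γ 2 = z ∧ γ 1 = α 1 := by
    intro α hR hz2
    have hαE := hR.1.1
    have hM2 := M2_of (hR.1.2 2) hz2
    have hSab : InS E z (α 0) (α 1) := ⟨α, hαE, rfl, rfl, hz2⟩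
    obtain ⟨x₀, hx₀, hSx₀⟩ := F12_of (hR.2 {1, 2} (by decide)) hz2
    obtain ⟨x', hx'S, hx'max⟩ := Int.exists_greatest_of_bdd
      (P := fun t => InS E z t (α 1)) ⟨b1, fun t ht => hb1 t (α 1) ht⟩ ⟨α 0, hSab⟩
    have hax' : α 0 < x' := lt_of_lt_of_le hx₀ (hx'max _ hSx₀)
    have noNS : ∀ y', α 1 < y' → ¬ InS E z x' y' := fun y' hy' h => hM2 x' y' hax' hy' h
    have noES : ∀ u, x' < u → ¬ InS E z u (α 1) := fun u hu h => absurd (hx'max u h) (by omega)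
    have noNE : ∀ u y', x' < u → α 1 < y' → ¬ InS E z u y' :=
      fun u y' hu hy' h => hM2 u y' (by omega) hy' h
    have noT : ¬ InT E z x' (α 1) := by
      intro h
      obtain ⟨u, hu, y', hy', hS⟩ := exch_ST_eq0 hB hx'S h
      rcases eq_or_lt_of_le hy' with he | hlt'
      · exact noES u hu (by rwa [← he] at hS)
      · exact noNE u y' hu hlt' hS
    have noNT : ∀ y', α 1 < y' → ¬ InT E z x' y' := by
      intro y' hy' h
      obtain ⟨u, hu, hS⟩ := exch_ST0 hB hx'S h (by omega)
      rw [min_eq_left (le_of_lt hy')] at hS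
      exact noES u hu hS
    have noET : ∀ u, x' < u → ¬ InT E z u (α 1) := by
      intro u hu h
      obtain ⟨y', hy', hS⟩ := exch_ST1 hB hx'S h (by omega)
      rw [min_eq_left (le_of_lt hu)] at hS
      exact noNS y' hy' hS
    obtain ⟨β, hβE, hβ0, hβ1, hβ2⟩ := hx'S
    refine ⟨β, ⟨hβE, ?_⟩, hβ2, hβ1⟩
    intro J hne hnuniv
    rcases enum_proper J hne hnuniv with rfl | rfl | rfl | rfl | rfl | rfl
    · exact fiber0_empty hβ2 (fun y' hy' => by rw [hβ0]; exact noNT y' (by omega))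
    · exact fiber1_empty hβ2 (fun u hu => by rw [hβ1]; exact noET u (by omega))
    · exact fiber2_empty hβ2 (fun u y' hu hy' => noNE u y' (by omega) (by omega))
    · exact fiber01_empty hβ2 (by rw [hβ0, hβ1]; exact noT)
    · exact fiber02_empty hβ2 (fun y' hy' => by rw [hβ0]; exact noNS y' (by omega))
    · exact fiber12_empty hβ2 (fun u hu => by rw [hβ1]; exact noES u (by omega))
  -- Step 2: every absolute maximal at level `z` yields a relative maximal in the same row
  have key2 : ∀ γ : Fin 3 → ℤ, IsAbsMax E γ → γ 2 = z →
      ∃ α : Fin 3 → ℤ, IsRelMax E α ∧ α 2 = z ∧ α 1 = γ 1 := by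
    intro γ hAb hz2
    have hγE := hAb.1
    have hSx' : InS E z (γ 0) (γ 1) := ⟨γ, hγE, rfl, rfl, hz2⟩
    have hA01 := A01_of (hAb.2 {0, 1} (by decide) (by decide)) hz2
    have hA02 := A02_of (hAb.2 {0, 2} (by decide) (by decide)) hz2
    have hA1 := M1_of (hAb.2 {1} (by decide) (by decide)) hz2
    have hA2 := M2_of (hAb.2 {2} (by decide) (by decide)) hz2
    have hexT : ∃ u, InT E z u (γ 1) := by
      rcases hTN (γ 0) (γ 1) hSx' with h | ⟨u, y', hy', hS⟩
      · exact h
      · rcases lt_trichotomy u (γ 0) with hu | rfl | hu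
        · have hm := exch_SS hB hSx' hS (by omega) (by omega)
          rw [min_eq_right (le_of_lt hu), min_eq_left (le_of_lt hy')] at hm
          exact ⟨u, hm⟩
        · exact absurd hS (hA02 y' hy')
        · exact absurd hS (hA2 u y' hu hy')
    have hbdd : ∀ t, InT E z t (γ 1) → t ≤ γ 0 := by
      intro t ht
      by_contra hgt
      push_neg at hgt
      exact hA1 t hgt ht
    obtain ⟨x, hxT, hxmax⟩ := Int.exists_greatest_of_bdd ⟨γ 0, hbdd⟩ hexT
    have hxlt : x < γ 0 := lt_of_le_of_ne (hbdd x hxT) (fun h => hA01 (h ▸ hxT))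
    have hSxb : InS E z x (γ 1) := by
      have hm := S_min hA hxT hSx'
      rwa [min_eq_left (le_of_lt hxlt), min_self] at hm
    have M0' : ∀ y', γ 1 < y' → ¬ InT E z x y' := by
      intro y' hy' h
      obtain ⟨u, hu, hT⟩ := exch_TT0 hB hxT h (by omega)
      rw [min_eq_left (le_of_lt hy')] at hT
      exact absurd (hxmax u hT) (by omega)
    have M1' : ∀ u, x < u → ¬ InT E z u (γ 1) := fun u hu h => absurd (hxmax u h) (by omega)
    have M2' : ∀ u y', x < u → γ 1 < y' → ¬ InS E z u y' := by
      intro u y' hu hy' h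
      rcases lt_trichotomy u (γ 0) with h' | rfl | h'
      · have hm := exch_SS hB hSx' h (by omega) (by omega)
        rw [min_eq_right (le_of_lt h'), min_eq_left (le_of_lt hy')] at hm
        exact absurd (hxmax u hm) (by omega)
      · exact hA02 y' hy' h
      · exact hA2 u y' h' hy' h
    have F02' : ∃ y', γ 1 < y' ∧ InS E z x y' := by
      obtain ⟨y', hy', u, hu, hS⟩ := exch_ST_eq1 hB hSxb hxT
      rcases eq_or_lt_of_le hu with he | hlt'
      · exact ⟨y', hy', by rwa [← he] at hS⟩
      · exact absurd hS (fun hh => M2' u y' hlt' hy' hh)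
    have F12' : ∃ u, x < u ∧ InS E z u (γ 1) := by
      obtain ⟨u, hu, y', hy', hS⟩ := exch_ST_eq0 hB hSxb hxT
      rcases eq_or_lt_of_le hy' with he | hlt'
      · exact ⟨u, hu, by rwa [← he] at hS⟩
      · exact absurd hS (fun hh => M2' u y' hu hlt' hh)
    obtain ⟨β, hβE, hβ0, hβ1, hβ2⟩ := hSxb
    refine ⟨β, ⟨⟨hβE, ?_⟩, ?_⟩, hβ2, hβ1⟩
    · intro i
      rcases fin3_cases i with rfl | rfl | rfl
      · exact fiber0_empty hβ2 (fun y' hy' => by rw [hβ0]; exact M0' y' (by omega))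
      · exact fiber1_empty hβ2 (fun u hu => by rw [hβ1]; exact M1' u (by omega))
      · exact fiber2_empty hβ2 (fun u y' hu hy' => M2' u y' (by omega) (by omega))
    · intro J hJ
      rcases enum_two_le J hJ with rfl | rfl | rfl | rfl
      · exact fiber01_ne hβ2 (by rw [hβ0, hβ1]; exact hxT)
      · obtain ⟨y', hy', hS⟩ := F02'
        exact fiber02_ne hβ2 (show β 1 < y' by omega) (by rw [hβ0]; exact hS)
      · obtain ⟨u, hu, hS⟩ := F12'
        exact fiber12_ne hβ2 (show β 0 < u by omega) (by rw [hβ1]; exact hS)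
      · exact fiber_univ_ne hβE
  -- relative maximals at level `z` have pairwise distinct second coordinates
  have hRdistinct : ∀ α β : Fin 3 → ℤ, IsRelMax E α → α 2 = z → IsRelMax E β → β 2 = z →
      α 1 = β 1 → α = β := by
    intro α β hα hαz hβ hβz h1
    have h0 : α 0 = β 0 := by
      by_contra hne
      rcases lt_or_gt_of_ne hne with h | h
      · have hT := F01_of (hβ.2 {0, 1} (by decide)) hβz
        exact M1_of (hα.1.2 1) hαz (β 0) h (by rw [h1]; exact hT)
      · have hT := F01_of (hα.2 {0, 1} (by decide)) hαz
        exact M1_of (hβ.1.2 1) hβz (α 0) h (by rw [← h1]; exact hT)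
    funext i
    rcases fin3_cases i with rfl | rfl | rfl
    · exact h0
    · exact h1
    · omega
  -- absolute maximals at level `z` have pairwise distinct second coordinates
  have hAdistinct : ∀ α β : Fin 3 → ℤ, IsAbsMax E α → α 2 = z → IsAbsMax E β → β 2 = z →
      α 1 = β 1 → α = β := by
    intro α β hα hαz hβ hβz h1
    have h0 : α 0 = β 0 := by
      by_contra hne
      rcases lt_or_gt_of_ne hne with h | h
      · exact A12_of (hα.2 {1, 2} (by decide) (by decide)) hαz (β 0) h
          (by rw [h1]; exact ⟨β, hβ.1, rfl, rfl, hβz⟩)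
      · exact A12_of (hβ.2 {1, 2} (by decide) (by decide)) hβz (α 0) h
          (by rw [← h1]; exact ⟨α, hα.1, rfl, rfl, hαz⟩)
    funext i
    rcases fin3_cases i with rfl | rfl | rfl
    · exact h0
    · exact h1
    · omega
  -- conclude by comparing the images under the second coordinate
  have hinjR : Set.InjOn (fun α : Fin 3 → ℤ => α 1)
      {α : Fin 3 → ℤ | IsRelMax E α ∧ α 2 = z} := fun α hα β hβ h =>
    hRdistinct α β hα.1 hα.2 hβ.1 hβ.2 h
  have hinjA : Set.InjOn (fun α : Fin 3 → ℤ => α 1)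
      {α : Fin 3 → ℤ | IsAbsMax E α ∧ α 2 = z} := fun α hα β hβ h =>
    hAdistinct α β hα.1 hα.2 hβ.1 hβ.2 h
  have himg : (fun α : Fin 3 → ℤ => α 1) '' {α : Fin 3 → ℤ | IsRelMax E α ∧ α 2 = z} =
      (fun α : Fin 3 → ℤ => α 1) '' {α : Fin 3 → ℤ | IsAbsMax E α ∧ α 2 = z} := by
    ext y
    constructor
    · rintro ⟨α, hα, rfl⟩
      obtain ⟨γ, hγ, hγz, hγ1⟩ := key1 α hα.1 hα.2
      exact ⟨γ, ⟨hγ, hγz⟩, hγ1⟩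
    · rintro ⟨γ, hγ, rfl⟩
      obtain ⟨α, hα, hαz, hα1⟩ := key2 γ hγ.1 hγ.2
      exact ⟨α, ⟨hα, hαz⟩, hα1⟩
  calc {α : Fin 3 → ℤ | IsAbsMax E α ∧ α 2 = z}.ncard
      = ((fun α : Fin 3 → ℤ => α 1) '' {α : Fin 3 → ℤ | IsAbsMax E α ∧ α 2 = z}).ncard :=
        (Set.ncard_image_of_injOn hinjA).symm
    _ = ((fun α : Fin 3 → ℤ => α 1) '' {α : Fin 3 → ℤ | IsRelMax E α ∧ α 2 = z}).ncard := by
        rw [himg]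
    _ = {α : Fin 3 → ℤ | IsRelMax E α ∧ α 2 = z}.ncard := Set.ncard_image_of_injOn hinjR
end
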